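/- Let G be a simple graph, v a vertex of G, and w = (v_0, …, v_l) a walk in G starting at v. For every index 0 ≤ i ≤ l, the distance in G from v to v_i is at most the distance from the vertex 0 to the vertex f_w(v_i) in the reconstructed graph A, where A is the simple graph with vertex set {f_w(v_0), …, f_w(v_l)} ⊆ ℕ and edge set {{f_w(v_j), f_w(v_{j+1})} : 0 ≤ j < l}. In particular, if every vertex of A is within distance r of the vertex 0 in A, then every vertex visited by w lies within distance r of v in G. -/
import Mathlib


/-- The first index at which the value `g i` occurs in `g`. -/
def firstOcc {n : ℕ} {α : Type*} [DecidableEq α] (g : Fin n → α) (i : Fin n) : Fin n :=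
  (Finset.univ.filter fun j => g j = g i).min' ⟨i, by simp⟩

/-- The anonymization of `g` at `i`: the number of distinct values of `g` occurring
strictly before the first occurrence of `g i`. -/
def anonymize {n : ℕ} {α : Type*} [DecidableEq α] (g : Fin n → α) (i : Fin n) : ℕ :=
  ((Finset.univ.filter fun j => j < firstOcc g i).image g).card

/-- The reconstructed graph `A` of a walk `w`: the simple graph on the vertex set
`{f_w(v_0), …, f_w(v_l)} ⊆ ℕ` whose edges are exactly the pairs `{f_w(v_i), f_w(v_{i+1})}`. -/
def reconGraph {V : Type*} [DecidableEq V] (l : ℕ) (w : Fin (l + 1) → V) :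
    SimpleGraph (Set.range (anonymize w)) :=
  SimpleGraph.induce (Set.range (anonymize w))
    (SimpleGraph.fromEdgeSet
      {e : Sym2 ℕ | ∃ j : Fin l, e = s(anonymize w j.castSucc, anonymize w j.succ)})

lemma firstOcc_apply_eq {n : ℕ} {α : Type*} [DecidableEq α] (g : Fin n → α) (i : Fin n) :
    g (firstOcc g i) = g i := by
  have := Finset.min'_mem (Finset.univ.filter fun j => g j = g i) ⟨i, by simp⟩
  simpa [firstOcc] using this

lemma firstOcc_le {n : ℕ} {α : Type*} [DecidableEq α] (g : Fin n → α) {i j : Fin n}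
    (h : g j = g i) : firstOcc g i ≤ j :=
  Finset.min'_le _ _ (by simp [h])

lemma anonymize_congr {n : ℕ} {α : Type*} [DecidableEq α] (g : Fin n → α) {i j : Fin n}
    (h : g i = g j) : anonymize g i = anonymize g j := by
  have : firstOcc g i = firstOcc g j := by
    unfold firstOcc
    congr 1
    ext k
    simp [h]
  simp [anonymize, this]

lemma anonymize_inj {n : ℕ} {α : Type*} [DecidableEq α] (g : Fin n → α) {i j : Fin n}
    (h : anonymize g i = anonymize g j) : g i = g j := by
  by_contra hne
  -- wlog: firstOcc g i < firstOcc g j leads to strict card inequality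
  have key : ∀ a b : Fin n, firstOcc g a < firstOcc g b → anonymize g a < anonymize g b := by
    intro a b hab
    apply Finset.card_lt_card
    constructor
    · apply Finset.image_subset_image
      intro k hk
      simp only [Finset.mem_filter, Finset.mem_univ, true_and] at hk ⊢
      exact hk.trans hab
    · intro hsub
      have hmem : g a ∈ (Finset.univ.filter fun k => k < firstOcc g b).image g := by
        refine Finset.mem_image.mpr ⟨firstOcc g a, ?_, firstOcc_apply_eq g a⟩
        simp [hab]
      have := hsub hmem
      rcases Finset.mem_image.mp this with ⟨k, hk, hgk⟩
      simp only [Finset.mem_filter, Finset.mem_univ, true_and] at hk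
      exact absurd (firstOcc_le g hgk) (not_le.mpr hk)
  rcases lt_trichotomy (firstOcc g i) (firstOcc g j) with hlt | heq | hgt
  · exact absurd h (ne_of_lt (key _ _ hlt))
  · exact hne (by rw [← firstOcc_apply_eq g i, heq, firstOcc_apply_eq g j])
  · exact absurd h.symm (ne_of_lt (key _ _ hgt))

/-- For a walk `w = (v_0, …, v_l)` in `G` starting at `v`, the distance in `G` from `v` to
`v_i` is at most the distance in the reconstructed graph `A` from the vertex
`f_w(v_0)` (the vertex `0`) to `f_w(v_i)`; in particular, if every vertex of `A` is within
distance `r` of the vertex `0` in `A`, then every vertex visited by `w` lies within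
distance `r` of `v` in `G`. -/
theorem dist_le_reconGraph_dist {V : Type*} [DecidableEq V] (G : SimpleGraph V) (l : ℕ)
    (v : V) (w : Fin (l + 1) → V) (h0 : w 0 = v)
    (hadj : ∀ i : Fin l, G.Adj (w i.castSucc) (w i.succ)) :
    (∀ i : Fin (l + 1),
      G.dist v (w i) ≤
        (reconGraph l w).dist ⟨anonymize w 0, ⟨0, rfl⟩⟩ ⟨anonymize w i, ⟨i, rfl⟩⟩) ∧
    ∀ r : ℕ,
      (∀ x : Set.range (anonymize w),
        (reconGraph l w).dist ⟨anonymize w 0, ⟨0, rfl⟩⟩ x ≤ r) →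
      ∀ i : Fin (l + 1), G.dist v (w i) ≤ r := by
  -- the map back from the reconstructed graph to V
  classical
  set A := reconGraph l w with hA
  have hφdef : ∀ x : Set.range (anonymize w), ∃ i : Fin (l + 1), anonymize w i = x.val :=
    fun x => x.2
  choose φidx hφidx using hφdef
  set φ : Set.range (anonymize w) → V := fun x => w (φidx x) with hφ
  have hφval : ∀ (i : Fin (l + 1)) (hx : (anonymize w i : ℕ) ∈ Set.range (anonymize w)),
      φ ⟨anonymize w i, hx⟩ = w i := by
    intro i hx
    exact anonymize_inj w (by rw [hφidx ⟨anonymize w i, hx⟩])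
  -- φ is a graph homomorphism A →g G
  have hmap : ∀ {a b : Set.range (anonymize w)}, A.Adj a b → G.Adj (φ a) (φ b) := by
    intro a b hab
    obtain ⟨hset, -⟩ : (∃ j : Fin l,
        s((a : ℕ), (b : ℕ)) = s(anonymize w j.castSucc, anonymize w j.succ)) ∧
        (a : ℕ) ≠ (b : ℕ) := hab
    obtain ⟨j, hj⟩ := hset
    have hφa : ∀ (i : Fin (l + 1)), (a : ℕ) = anonymize w i → φ a = w i := by
      intro i hi
      exact anonymize_inj w (by rw [hφidx a, hi])
    have hφb : ∀ (i : Fin (l + 1)), (b : ℕ) = anonymize w i → φ b = w i := by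
      intro i hi
      exact anonymize_inj w (by rw [hφidx b, hi])
    rw [Sym2.eq_iff] at hj
    rcases hj with ⟨h1, h2⟩ | ⟨h1, h2⟩
    · rw [hφa _ h1, hφb _ h2]; exact hadj j
    · rw [hφa _ h1, hφb _ h2]; exact (hadj j).symm
  let hom : A →g G := ⟨φ, fun h => hmap h⟩
  -- reachability from the 0 vertex in A
  have hreach : ∀ i : Fin (l + 1),
      A.Reachable ⟨anonymize w 0, ⟨0, rfl⟩⟩ ⟨anonymize w i, ⟨i, rfl⟩⟩ := by
    intro i
    induction i using Fin.induction with
    | zero => exact SimpleGraph.Reachable.refl _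
    | succ j ih =>
      refine SimpleGraph.Reachable.trans ih (SimpleGraph.Adj.reachable ?_)
      have hne : anonymize w j.castSucc ≠ anonymize w j.succ := by
        intro h
        exact (hadj j).ne (anonymize_inj w h)
      exact ⟨⟨j, rfl⟩, hne⟩
  have main : ∀ i : Fin (l + 1),
      G.dist v (w i) ≤ A.dist ⟨anonymize w 0, ⟨0, rfl⟩⟩ ⟨anonymize w i, ⟨i, rfl⟩⟩ := by
    intro i
    obtain ⟨p, hp⟩ := (hreach i).exists_walk_length_eq_dist
    have := SimpleGraph.dist_le (p.map hom)
    rw [SimpleGraph.Walk.length_map, hp] at this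
    have ha : hom ⟨anonymize w 0, ⟨0, rfl⟩⟩ = v := by
      show φ _ = v
      rw [hφval 0 ⟨0, rfl⟩, h0]
    have hb : hom ⟨anonymize w i, ⟨i, rfl⟩⟩ = w i := hφval i ⟨i, rfl⟩
    rwa [ha, hb] at this
  refine ⟨main, fun r hr i => le_trans (main i) (hr _)⟩
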